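/- arXiv:1109.1649 — 3 statements merged into one kernel-verified Lean document; each statement's English description precedes it below -/
import Mathlib

section
/- Let n ≥ 1, let H = ∏_{i=1}^n [a_i, b_i] ⊆ ℝ^n be a rectangle with a_i < b_i for all i, and let X ⊆ H be an arbitrary subset. Then the rectangular κ-grid measures of X converge to the Lebesgue outer measure of X, i.e. lim_{κ → ∞} λ^κ(X) = λ*(X). -/
open MeasureTheory Set Filter

/-- The κ-tile of the rectangle `∏ i, [a i, b i]` indexed by the multi-index `k`. -/
noncomputable def tile (n : ℕ) (a b : Fin n → ℝ) (κ : ℕ) (k : Fin n → ℕ) :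
    Set (Fin n → ℝ) :=
  Set.univ.pi fun i =>
    Set.Icc (a i + (k i : ℝ) / κ * (b i - a i)) (a i + ((k i : ℝ) + 1) / κ * (b i - a i))

/-- The common volume of a κ-tile of the rectangle `∏ i, [a i, b i]`. -/
noncomputable def tileVol (n : ℕ) (a b : Fin n → ℝ) (κ : ℕ) : ℝ :=
  ∏ i, (b i - a i) / κ

/-- The tile indexed by `k` belongs to `Tiles^κ(X)`, i.e. the Lebesgue outer measure of the
intersection of the tile with `X` is at least half the volume of the tile. -/
def isApproxTile (n : ℕ) (a b : Fin n → ℝ) (κ : ℕ) (X : Set (Fin n → ℝ))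
    (k : Fin n → Fin κ) : Prop :=
  ENNReal.ofReal (tileVol n a b κ) / 2 ≤ volume (tile n a b κ (fun i => (k i : ℕ)) ∩ X)

open Classical in
/-- The rectangular κ-grid measure `λ^κ(X)`: the total volume of the κ-tiles approximating `X`. -/
noncomputable def gridMeasure (n : ℕ) (a b : Fin n → ℝ) (κ : ℕ)
    (X : Set (Fin n → ℝ)) : ℝ :=
  ∑ k : Fin n → Fin κ, if isApproxTile n a b κ X k then tileVol n a b κ else 0

namespace GridAux

open Metric
open scoped ENNReal NNReal

variable {n : ℕ} {a b : Fin n → ℝ}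

/-- The half-open version of a κ-tile. -/
def tileHalf (n : ℕ) (a b : Fin n → ℝ) (κ : ℕ) (k : Fin n → ℕ) : Set (Fin n → ℝ) :=
  Set.univ.pi fun i =>
    Set.Ico (a i + (k i : ℝ) / κ * (b i - a i)) (a i + ((k i : ℝ) + 1) / κ * (b i - a i))

lemma tileVol_pos (hab : ∀ i, a i < b i) {κ : ℕ} (hκ : 1 ≤ κ) : 0 < tileVol n a b κ :=
  Finset.prod_pos fun i _ => div_pos (sub_pos.2 (hab i))
    (by exact_mod_cast Nat.pos_of_ne_zero (by omega))

lemma tileVol_nonneg (hab : ∀ i, a i < b i) (κ : ℕ) : 0 ≤ tileVol n a b κ :=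
  Finset.prod_nonneg fun i _ => div_nonneg (sub_nonneg.2 (hab i).le) (Nat.cast_nonneg κ)

lemma volume_tile (hab : ∀ i, a i < b i) {κ : ℕ} (hκ : 1 ≤ κ) (k : Fin n → ℕ) :
    volume (tile n a b κ k) = ENNReal.ofReal (tileVol n a b κ) := by
  have hκ0 : (κ : ℝ) ≠ 0 := by exact_mod_cast (Nat.pos_of_ne_zero (by omega)).ne'
  rw [tile, volume_pi_pi, tileVol,
    ENNReal.ofReal_prod_of_nonneg fun i _ =>
      div_nonneg (sub_nonneg.2 (hab i).le) (Nat.cast_nonneg κ)]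
  refine Finset.prod_congr rfl fun i _ => ?_
  rw [Real.volume_Icc]
  congr 1
  field_simp
  ring

lemma volume_tileHalf (hab : ∀ i, a i < b i) {κ : ℕ} (hκ : 1 ≤ κ) (k : Fin n → ℕ) :
    volume (tileHalf n a b κ k) = ENNReal.ofReal (tileVol n a b κ) := by
  have hκ0 : (κ : ℝ) ≠ 0 := by exact_mod_cast (Nat.pos_of_ne_zero (by omega)).ne'
  rw [tileHalf, volume_pi_pi, tileVol,
    ENNReal.ofReal_prod_of_nonneg fun i _ =>
      div_nonneg (sub_nonneg.2 (hab i).le) (Nat.cast_nonneg κ)]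
  refine Finset.prod_congr rfl fun i _ => ?_
  rw [Real.volume_Ico]
  congr 1
  field_simp
  ring

lemma tileHalf_subset_tile (κ : ℕ) (k : Fin n → ℕ) :
    tileHalf n a b κ k ⊆ tile n a b κ k :=
  Set.pi_mono fun i _ => Set.Ico_subset_Icc_self

lemma measurableSet_tileHalf (κ : ℕ) (k : Fin n → ℕ) :
    MeasurableSet (tileHalf n a b κ k) :=
  MeasurableSet.univ_pi fun i => measurableSet_Ico

lemma measurableSet_tile (κ : ℕ) (k : Fin n → ℕ) :
    MeasurableSet (tile n a b κ k) :=
  MeasurableSet.univ_pi fun i => measurableSet_Icc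

lemma grid_mono (hab : ∀ i, a i < b i) (i : Fin n) {κ : ℕ} (hκ : 1 ≤ κ) {j1 j2 : ℝ}
    (h : j1 ≤ j2) :
    a i + j1 / κ * (b i - a i) ≤ a i + j2 / κ * (b i - a i) := by
  have hκ0 : (0:ℝ) < κ := by exact_mod_cast Nat.pos_of_ne_zero (by omega)
  have := sub_nonneg.2 (hab i).le
  gcongr

lemma tile_subset_H (hab : ∀ i, a i < b i) {κ : ℕ} (hκ : 1 ≤ κ) {k : Fin n → ℕ}
    (hk : ∀ i, k i < κ) :
    tile n a b κ k ⊆ Set.univ.pi fun i => Set.Icc (a i) (b i) := by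
  have hκ0 : (0:ℝ) < κ := by exact_mod_cast Nat.pos_of_ne_zero (by omega)
  refine Set.pi_mono fun i _ => Set.Icc_subset_Icc ?_ ?_
  · have : (0:ℝ) ≤ (k i : ℝ) / κ * (b i - a i) :=
      mul_nonneg (div_nonneg (Nat.cast_nonneg _) hκ0.le) (sub_nonneg.2 (hab i).le)
    linarith
  · have h1 : ((k i : ℝ) + 1) / κ ≤ 1 := by
      rw [div_le_one hκ0]
      exact_mod_cast hk i
    have : ((k i : ℝ) + 1) / κ * (b i - a i) ≤ 1 * (b i - a i) :=
      mul_le_mul_of_nonneg_right h1 (sub_nonneg.2 (hab i).le)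
    linarith

lemma tileHalf_eq_of_mem (hab : ∀ i, a i < b i) {κ : ℕ} (hκ : 1 ≤ κ) {k1 k2 : Fin n → ℕ}
    {x : Fin n → ℝ} (h1 : x ∈ tileHalf n a b κ k1) (h2 : x ∈ tileHalf n a b κ k2) :
    k1 = k2 := by
  funext i
  by_contra hne
  have m1 := h1 i (Set.mem_univ i)
  have m2 := h2 i (Set.mem_univ i)
  simp only [Set.mem_Ico] at m1 m2
  rcases Nat.lt_or_ge (k1 i) (k2 i) with h | h
  · have : (k1 i : ℝ) + 1 ≤ (k2 i : ℝ) := by exact_mod_cast h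
    have := grid_mono hab i hκ this
    linarith [m1.2, m2.1]
  · have hlt : k2 i < k1 i := lt_of_le_of_ne h (Ne.symm hne)
    have : (k2 i : ℝ) + 1 ≤ (k1 i : ℝ) := by exact_mod_cast hlt
    have := grid_mono hab i hκ this
    linarith [m2.2, m1.1]

/-- The index of the unique half-open κ-tile containing `x`. -/
noncomputable def kIdx (a b : Fin n → ℝ) (κ : ℕ) (x : Fin n → ℝ) (i : Fin n) : ℕ :=
  ⌊(x i - a i) * κ / (b i - a i)⌋₊

lemma kIdx_lt (hab : ∀ i, a i < b i) {κ : ℕ} (hκ : 1 ≤ κ) {x : Fin n → ℝ}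
    (hx : ∀ i, a i ≤ x i ∧ x i < b i) (i : Fin n) : kIdx a b κ x i < κ := by
  have hba : (0:ℝ) < b i - a i := sub_pos.2 (hab i)
  have hκ0 : (0:ℝ) < κ := by exact_mod_cast Nat.pos_of_ne_zero (by omega)
  rw [kIdx, Nat.floor_lt (div_nonneg (mul_nonneg (sub_nonneg.2 (hx i).1) hκ0.le) hba.le)]
  rw [div_lt_iff₀ hba]
  have := (hx i).2
  nlinarith

lemma mem_tileHalf_kIdx (hab : ∀ i, a i < b i) {κ : ℕ} (hκ : 1 ≤ κ) {x : Fin n → ℝ}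
    (hx : ∀ i, a i ≤ x i ∧ x i < b i) :
    x ∈ tileHalf n a b κ (kIdx a b κ x) := by
  intro i _
  rw [Set.mem_Ico]
  have hba : (0:ℝ) < b i - a i := sub_pos.2 (hab i)
  have hκ0 : (0:ℝ) < κ := by exact_mod_cast Nat.pos_of_ne_zero (by omega)
  set t : ℝ := (x i - a i) * κ / (b i - a i) with ht
  have htnn : 0 ≤ t := div_nonneg (mul_nonneg (sub_nonneg.2 (hx i).1) hκ0.le) hba.le
  have hfl : (⌊t⌋₊ : ℝ) ≤ t := Nat.floor_le htnn
  have hfu : t < ⌊t⌋₊ + 1 := Nat.lt_floor_add_one t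
  have htv : t * (b i - a i) = (x i - a i) * κ := div_mul_cancel₀ _ hba.ne'
  constructor
  · have h2 : (kIdx a b κ x i : ℝ) / κ * (b i - a i) ≤ x i - a i := by
      rw [div_mul_eq_mul_div, div_le_iff₀ hκ0]
      calc (kIdx a b κ x i : ℝ) * (b i - a i) = (⌊t⌋₊ : ℝ) * (b i - a i) := rfl
        _ ≤ t * (b i - a i) := mul_le_mul_of_nonneg_right hfl hba.le
        _ = (x i - a i) * κ := htv
    linarith
  · have h2 : x i - a i < ((kIdx a b κ x i : ℝ) + 1) / κ * (b i - a i) := by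
      rw [div_mul_eq_mul_div, lt_div_iff₀ hκ0]
      calc (x i - a i) * κ = t * (b i - a i) := htv.symm
        _ < ((⌊t⌋₊ : ℝ) + 1) * (b i - a i) := mul_lt_mul_of_pos_right hfu hba
    linarith

/-- The total side length, an upper bound for all side lengths. -/
noncomputable def Msum (n : ℕ) (a b : Fin n → ℝ) : ℝ := ∑ j, (b j - a j)

lemma side_le_Msum (hab : ∀ i, a i < b i) (i : Fin n) : b i - a i ≤ Msum n a b :=
  Finset.single_le_sum (fun j _ => sub_nonneg.2 (hab j).le) (Finset.mem_univ i)

lemma Msum_nonneg (hab : ∀ i, a i < b i) : 0 ≤ Msum n a b :=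
  Finset.sum_nonneg fun j _ => sub_nonneg.2 (hab j).le

/-- The doubling-type constant used for the Vitali family of tiles. -/
noncomputable def gridC (n : ℕ) (a b : Fin n → ℝ) : NNReal :=
  Real.toNNReal (∏ i, 6 * Msum n a b / (b i - a i))

lemma gridC_coe (n : ℕ) (a b : Fin n → ℝ) :
    (gridC n a b : ℝ≥0∞) = ENNReal.ofReal (∏ i, 6 * Msum n a b / (b i - a i)) := rfl

lemma three_pow_le_gridC (hab : ∀ i, a i < b i) :
    (3:ℝ) ^ n ≤ ∏ i, 6 * Msum n a b / (b i - a i) := by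
  have h3 : (3:ℝ) ^ n = ∏ _i : Fin n, (3:ℝ) := by
    rw [Finset.prod_const, Finset.card_univ, Fintype.card_fin]
  rw [h3]
  refine Finset.prod_le_prod (fun i _ => by norm_num) fun i _ => ?_
  have hba : (0:ℝ) < b i - a i := sub_pos.2 (hab i)
  rw [le_div_iff₀ hba]
  have := side_le_Msum hab i
  nlinarith

lemma vitali_hyp (hab : ∀ i, a i < b i) (x : Fin n → ℝ) :
    ∃ᶠ r in nhdsWithin 0 (Set.Ioi 0), volume (closedBall x (3 * r)) ≤
      (gridC n a b : ℝ≥0∞) * volume (closedBall x r) := by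
  refine Eventually.frequently (eventually_nhdsWithin_of_forall fun r hr => ?_)
  have hr : (0:ℝ) < r := hr
  rw [Real.volume_pi_closedBall _ (by linarith : (0:ℝ) ≤ 3*r),
    Real.volume_pi_closedBall _ hr.le, Fintype.card_fin, gridC_coe,
    ← ENNReal.ofReal_mul (Finset.prod_nonneg fun i _ =>
      div_nonneg (by nlinarith [Msum_nonneg hab] : (0:ℝ) ≤ 6 * Msum n a b)
        (sub_nonneg.2 (hab i).le))]
  apply ENNReal.ofReal_le_ofReal
  have h1 : (2 * (3 * r)) ^ n = 3 ^ n * (2 * r) ^ n := by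
    rw [← mul_pow]; ring_nf
  rw [h1]
  have h2 := three_pow_le_gridC hab
  have h3 : (0:ℝ) ≤ (2*r)^n := by positivity
  nlinarith

/-- A Vitali family on `ℝ^n` adapted to the tiles of the rectangle `∏ i, [a i, b i]`. -/
noncomputable def gridVitali (n : ℕ) (a b : Fin n → ℝ) (hab : ∀ i, a i < b i) :
    VitaliFamily (volume : Measure (Fin n → ℝ)) :=
  Vitali.vitaliFamily volume (gridC n a b) (vitali_hyp hab)

lemma tile_subset_closedBall (hab : ∀ i, a i < b i) {κ : ℕ} (hκ : 1 ≤ κ) {k : Fin n → ℕ}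
    {x : Fin n → ℝ} (hx : x ∈ tile n a b κ k) :
    tile n a b κ k ⊆ closedBall x (Msum n a b / κ) := by
  have hκ0 : (0:ℝ) < κ := by exact_mod_cast Nat.pos_of_ne_zero (by omega)
  intro y hy
  rw [mem_closedBall, dist_pi_le_iff (div_nonneg (Msum_nonneg hab) hκ0.le)]
  intro i
  have h1 := hx i (Set.mem_univ i)
  have h2 := hy i (Set.mem_univ i)
  simp only [Set.mem_Icc] at h1 h2
  rw [Real.dist_eq, abs_le]
  have hlen : (a i + ((k i : ℝ) + 1) / κ * (b i - a i)) -
      (a i + (k i : ℝ) / κ * (b i - a i)) = (b i - a i) / κ := by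
    field_simp; ring
  have hside : (b i - a i) / κ ≤ Msum n a b / κ := by
    gcongr
    exact side_le_Msum hab i
  constructor <;> nlinarith [h1.1, h1.2, h2.1, h2.2]

lemma tile_mem_setsAt (hab : ∀ i, a i < b i) {κ : ℕ} (hκ : 1 ≤ κ)
    {k : Fin n → ℕ} {x : Fin n → ℝ} (hx : x ∈ tile n a b κ k) :
    tile n a b κ k ∈ (gridVitali n a b hab).setsAt x := by
  have hκ0 : (0:ℝ) < κ := by exact_mod_cast Nat.pos_of_ne_zero (by omega)
  simp only [gridVitali, Vitali.vitaliFamily, Set.mem_setOf_eq]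
  refine ⟨isClosed_set_pi fun i _ => isClosed_Icc, ?_, Msum n a b / κ,
    tile_subset_closedBall hab hκ hx, ?_⟩
  · rw [tile, interior_pi_set Set.finite_univ, Set.univ_pi_nonempty_iff]
    intro i
    simp only [Function.comp_apply, interior_Icc]
    refine Set.nonempty_Ioo.2 ?_
    have hba : (0:ℝ) < b i - a i := sub_pos.2 (hab i)
    have hq : (k i : ℝ) / κ < ((k i : ℝ) + 1) / κ := by
      rw [div_lt_div_iff₀ hκ0 hκ0]; nlinarith
    nlinarith
  · rw [volume_tile hab hκ, Real.volume_pi_closedBall _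
      (by have := Msum_nonneg hab; positivity : (0:ℝ) ≤ 3 * (Msum n a b / κ)),
      Fintype.card_fin, gridC_coe,
      ← ENNReal.ofReal_mul (Finset.prod_nonneg fun i _ =>
        div_nonneg (by nlinarith [Msum_nonneg hab] : (0:ℝ) ≤ 6 * Msum n a b)
          (sub_nonneg.2 (hab i).le))]
    apply ENNReal.ofReal_le_ofReal
    rw [tileVol, ← Finset.prod_mul_distrib]
    have heach : ∀ i : Fin n, 6 * Msum n a b / (b i - a i) * ((b i - a i) / κ)
        = 6 * Msum n a b / κ := by
      intro i
      have hba : (b i - a i) ≠ 0 := (sub_pos.2 (hab i)).ne'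
      field_simp
    rw [Finset.prod_congr rfl fun i _ => heach i, Finset.prod_const, Finset.card_univ,
      Fintype.card_fin]
    have h6 : (2 * (3 * (Msum n a b / κ))) = 6 * Msum n a b / κ := by ring
    rw [h6]

end GridAux

/-- For any subset `X` of the rectangle `H = ∏ i, [a i, b i]`, the rectangular κ-grid
measures of `X` converge to the Lebesgue outer measure of `X` as `κ → ∞`. -/
theorem gridMeasure_tendsto_outerMeasure (n : ℕ) (hn : 1 ≤ n) (a b : Fin n → ℝ)
    (hab : ∀ i, a i < b i) (X : Set (Fin n → ℝ))
    (hX : X ⊆ Set.univ.pi fun i => Set.Icc (a i) (b i)) :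
    Tendsto (fun κ : ℕ => gridMeasure n a b κ X) atTop (nhds (volume X).toReal) := by
  classical
  open GridAux in
  set H : Set (Fin n → ℝ) := Set.univ.pi fun i => Set.Icc (a i) (b i) with hHdef
  have hHm : MeasurableSet H := MeasurableSet.univ_pi fun i => measurableSet_Icc
  have hHfin : volume H ≠ ⊤ := by
    rw [hHdef, volume_pi_pi]
    exact (ENNReal.prod_lt_top fun i _ => by rw [Real.volume_Icc]; exact ENNReal.ofReal_lt_top).ne
  have hXfin : volume X ≠ ⊤ := fun h => hHfin (top_le_iff.1 (h ▸ measure_mono hX))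
  set E : Set (Fin n → ℝ) := toMeasurable volume X ∩ H with hEdef
  have hEm : MeasurableSet E := (measurableSet_toMeasurable _ _).inter hHm
  have hEH : E ⊆ H := Set.inter_subset_right
  have hEfin : volume E ≠ ⊤ := fun h => hHfin (top_le_iff.1 (h ▸ measure_mono hEH))
  have key : ∀ s : Set (Fin n → ℝ), MeasurableSet s → s ⊆ H →
      volume (s ∩ X) = volume (s ∩ E) := by
    intro s hsm hsH
    rw [Set.inter_comm s X, ← Measure.measure_toMeasurable_inter hsm hXfin, Set.inter_comm s E]
    congr 1
    rw [hEdef, Set.inter_assoc]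
    congr 1
    exact (Set.inter_eq_self_of_subset_right hsH).symm ▸ (Set.inter_eq_self_of_subset_right hsH)
  have hvolXE : volume X = volume E := by
    have := key H hHm Set.Subset.rfl
    rwa [Set.inter_eq_self_of_subset_right hX, Set.inter_eq_self_of_subset_right hEH] at this
  
  -- the grid measures of `X` and of its measurable hull `E` agree
  have hgrid : ∀ κ : ℕ, gridMeasure n a b κ X = gridMeasure n a b κ E := by
    intro κ
    unfold gridMeasure
    refine Finset.sum_congr rfl fun k _ => ?_
    have hκ : 1 ≤ κ := by
      rcases Nat.eq_zero_or_pos κ with h | h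
      · subst h; exact (k ⟨0, hn⟩).elim0
      · exact h
    have hsub : tile n a b κ (fun i => (k i : ℕ)) ⊆ H :=
      tile_subset_H hab hκ fun i => (k i).isLt
    have hiff : isApproxTile n a b κ X k ↔ isApproxTile n a b κ E k := by
      unfold isApproxTile
      rw [key _ (measurableSet_tile κ _) hsub]
    exact if_congr hiff rfl rfl
  set v : VitaliFamily (volume : Measure (Fin n → ℝ)) := gridVitali n a b hab with hv
  set Ss : ℕ → Set (Fin n → ℝ) := fun κ =>
    ⋃ k ∈ Finset.univ.filter (fun k : Fin n → Fin κ => isApproxTile n a b κ E k),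
      tileHalf n a b κ (fun i => (k i : ℕ)) with hSs
  have hSm : ∀ κ, MeasurableSet (Ss κ) := fun κ =>
    Finset.measurableSet_biUnion _ fun k _ => measurableSet_tileHalf _ _
  have hSsub : ∀ κ, 1 ≤ κ → Ss κ ⊆ H := fun κ hκ =>
    Set.iUnion₂_subset fun k _ =>
      (tileHalf_subset_tile _ _).trans (tile_subset_H hab hκ fun i => (k i).isLt)
  have hSvol : ∀ κ, 1 ≤ κ → volume (Ss κ) = ENNReal.ofReal (gridMeasure n a b κ E) := by
    intro κ hκ
    have hd : (↑(Finset.univ.filter (fun k : Fin n → Fin κ => isApproxTile n a b κ E k)) :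
        Set (Fin n → Fin κ)).PairwiseDisjoint
          (fun k : Fin n → Fin κ => tileHalf n a b κ (fun i => (k i : ℕ))) := by
      intro k1 _ k2 _ hne
      refine Set.disjoint_left.2 fun x h1 h2 => hne ?_
      have heq := tileHalf_eq_of_mem hab hκ h1 h2
      funext i
      exact Fin.ext (congrFun heq i)
    have hgm : gridMeasure n a b κ E =
        ∑ k ∈ Finset.univ.filter (fun k : Fin n → Fin κ => isApproxTile n a b κ E k),
          tileVol n a b κ := by
      unfold gridMeasure
      rw [Finset.sum_filter]
    rw [hSs, measure_biUnion_finset hd fun k _ => measurableSet_tileHalf _ _, hgm,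
      ENNReal.ofReal_sum_of_nonneg fun k _ => tileVol_nonneg hab κ]
    exact Finset.sum_congr rfl fun k _ => volume_tileHalf hab hκ _
  have hbae : ∀ᵐ x : Fin n → ℝ, ∀ i, x i ≠ b i := by
    rw [ae_all_iff]
    intro i
    rw [ae_iff]
    have h0 : volume {x : Fin n → ℝ | x i = b i} = 0 := by
      have := MeasureTheory.Measure.pi_hyperplane (fun _ : Fin n => (volume : Measure ℝ)) i (b i)
      rw [volume_pi]
      exact this
    simpa using h0
  have hlim : ∀ᵐ x : Fin n → ℝ, ∀ᶠ κ in atTop, (x ∈ Ss κ ↔ x ∈ E) := by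
    filter_upwards [v.ae_tendsto_measure_inter_div_of_measurableSet hEm, hbae] with x hx hxb
    by_cases hxH : x ∈ H
    · have hx' : ∀ i, a i ≤ x i ∧ x i < b i := by
        intro i
        have h := hxH i (Set.mem_univ i)
        rw [Set.mem_Icc] at h
        exact ⟨h.1, lt_of_le_of_ne h.2 (hxb i)⟩
      set w : ℕ → Set (Fin n → ℝ) := fun κ => tile n a b κ (kIdx a b κ x) with hw
      have hmemHalf : ∀ κ, 1 ≤ κ → x ∈ tileHalf n a b κ (kIdx a b κ x) :=
        fun κ hκ => mem_tileHalf_kIdx hab hκ hx'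
      have hmemT : ∀ κ, 1 ≤ κ → x ∈ w κ :=
        fun κ hκ => tileHalf_subset_tile _ _ (hmemHalf κ hκ)
      have htend : Tendsto w atTop (v.filterAt x) := by
        refine v.tendsto_filterAt_iff.2 ⟨?_, ?_⟩
        · filter_upwards [eventually_ge_atTop 1] with κ hκ
          exact tile_mem_setsAt hab hκ (hmemT κ hκ)
        · intro ε hε
          filter_upwards [eventually_ge_atTop 1,
            (tendsto_const_div_atTop_nhds_zero_nat (Msum n a b)).eventually
              (gt_mem_nhds hε)] with κ hκ hκ2
          exact (tile_subset_closedBall hab hκ (hmemT κ hκ)).trans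
            (Metric.closedBall_subset_closedBall hκ2.le)
      have hratio := hx.comp htend
      by_cases hxE : x ∈ E
      · simp only [Set.indicator_of_mem hxE, Pi.one_apply] at hratio
        have hev := hratio.eventually (eventually_gt_nhds
          (ENNReal.half_lt_self one_ne_zero ENNReal.one_ne_top))
        filter_upwards [hev, eventually_ge_atTop 1] with κ hgt hκ
        simp only [Function.comp_apply] at hgt
        simp only [hxE, iff_true]
        have hvol : volume (w κ) = ENNReal.ofReal (tileVol n a b κ) :=
          volume_tile hab hκ (kIdx a b κ x)
        have h0 : volume (w κ) ≠ 0 := by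
          rw [hvol]
          exact (ENNReal.ofReal_pos.2 (tileVol_pos hab hκ)).ne'
        have htop : volume (w κ) ≠ ⊤ := by rw [hvol]; exact ENNReal.ofReal_ne_top
        have hle : 1/2 * volume (w κ) ≤ volume (E ∩ w κ) :=
          (ENNReal.le_div_iff_mul_le (Or.inl h0) (Or.inl htop)).1 hgt.le
        have happrox : isApproxTile n a b κ E
            (fun i => (⟨kIdx a b κ x i, kIdx_lt hab hκ hx' i⟩ : Fin κ)) := by
          show ENNReal.ofReal (tileVol n a b κ) / 2 ≤ _
          calc ENNReal.ofReal (tileVol n a b κ) / 2 = volume (w κ) / 2 := by rw [hvol]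
            _ = 1/2 * volume (w κ) := by rw [one_div, ENNReal.div_eq_inv_mul]
            _ ≤ volume (E ∩ w κ) := hle
            _ = volume (tile n a b κ
                (fun i => ((⟨kIdx a b κ x i, kIdx_lt hab hκ hx' i⟩ : Fin κ) : ℕ)) ∩ E) := by
                rw [Set.inter_comm]
        exact Set.mem_iUnion₂.2 ⟨_, Finset.mem_coe.2
          (Finset.mem_filter.2 ⟨Finset.mem_univ _, happrox⟩), hmemHalf κ hκ⟩
      · simp only [Set.indicator_of_notMem hxE] at hratio
        have hev := hratio.eventually (eventually_lt_nhds
          (by norm_num : (0:ENNReal) < 1/2))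
        filter_upwards [hev, eventually_ge_atTop 1] with κ hlt hκ
        simp only [Function.comp_apply] at hlt
        simp only [hxE, iff_false]
        intro hmem
        obtain ⟨k', hk', hxk'⟩ := Set.mem_iUnion₂.1 hmem
        have happrox := (Finset.mem_filter.1 hk').2
        have heq : (fun i => (k' i : ℕ)) = kIdx a b κ x :=
          tileHalf_eq_of_mem hab hκ hxk' (hmemHalf κ hκ)
        unfold isApproxTile at happrox
        rw [heq] at happrox
        have hvol : volume (w κ) = ENNReal.ofReal (tileVol n a b κ) :=
          volume_tile hab hκ (kIdx a b κ x)
        have h0 : volume (w κ) ≠ 0 := by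
          rw [hvol]
          exact (ENNReal.ofReal_pos.2 (tileVol_pos hab hκ)).ne'
        have htop : volume (w κ) ≠ ⊤ := by rw [hvol]; exact ENNReal.ofReal_ne_top
        have hge : 1/2 ≤ volume (E ∩ w κ) / volume (w κ) := by
          rw [ENNReal.le_div_iff_mul_le (Or.inl h0) (Or.inl htop)]
          calc 1/2 * volume (w κ) = volume (w κ) / 2 := by
                rw [one_div, ENNReal.div_eq_inv_mul]
            _ = ENNReal.ofReal (tileVol n a b κ) / 2 := by rw [hvol]
            _ ≤ volume (tile n a b κ (kIdx a b κ x) ∩ E) := happrox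
            _ = volume (E ∩ w κ) := by rw [Set.inter_comm]
        exact absurd hlt (not_lt.2 hge)
    · filter_upwards [eventually_ge_atTop 1] with κ hκ
      exact iff_of_false (fun hmem => hxH (hSsub κ hκ hmem)) (fun hmem => hxH (hEH hmem))
  have hT : Tendsto (fun κ => volume (Ss κ)) atTop (nhds (volume E)) :=
    tendsto_measure_of_ae_tendsto_indicator atTop hEm hSm hHm hHfin
      (by filter_upwards [eventually_ge_atTop 1] with κ hκ; exact hSsub κ hκ) hlim
  have hT2 : Tendsto (fun κ => ENNReal.ofReal (gridMeasure n a b κ E)) atTop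
      (nhds (volume E)) := by
    refine hT.congr' ?_
    filter_upwards [eventually_ge_atTop 1] with κ hκ
    exact hSvol κ hκ
  rw [hvolXE]
  have hT3 := (ENNReal.tendsto_toReal hEfin).comp hT2
  refine hT3.congr fun κ => ?_
  have hnn : 0 ≤ gridMeasure n a b κ E := by
    apply Finset.sum_nonneg
    intro k _
    split
    · exact tileVol_nonneg hab κ
    · exact le_refl 0
  simp only [Function.comp_apply]
  rw [ENNReal.toReal_ofReal hnn, hgrid κ]
end

section
/- Let n ≥ 1, let H = ∏_{i=1}^n [a_i, b_i] ⊆ ℝ^n be a rectangle with a_i < b_i for all i, and let X ⊆ H. Then for every integer κ ≥ 1 the rectangular κ-grid measure of X is at most twice its Lebesgue outer measure: λ^κ(X) ≤ 2·λ*(X). -/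
open MeasureTheory Set Filter

/-! Each approximating tile `A` satisfies `vol A ≤ 2 λ*(A ∩ X)`. The closed tiles are measurable
and any two of them meet inside a hyperplane, so they are a.e. disjoint. Since
`λ*(A ∩ X) = (λ|_X) A` for measurable `A`, and `λ|_X` is a measure even when `X` is not measurable,
these outer measures add up to at most `λ*(X)`. -/

open Function

theorem MeasureTheory.sum_measure_inter_le {ι α : Type*} [MeasurableSpace α] {μ : Measure α}
    {s : Finset ι} {t : ι → Set α} (ht : ∀ i ∈ s, MeasurableSet (t i))
    (hd : (s : Set ι).Pairwise (AEDisjoint μ on t)) (X : Set α) :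
    ∑ i ∈ s, μ (t i ∩ X) ≤ μ X := by
  have hdX : (s : Set ι).Pairwise (AEDisjoint (μ.restrict X) on t) := fun i hi j hj hij =>
    Measure.absolutelyContinuous_of_le Measure.restrict_le_self (hd hi hj hij)
  calc ∑ i ∈ s, μ (t i ∩ X) = ∑ i ∈ s, μ.restrict X (t i) :=
        Finset.sum_congr rfl fun i hi => (Measure.restrict_apply (ht i hi)).symm
    _ ≤ μ.restrict X univ :=
        sum_measure_le_measure_univ (fun i hi => (ht i hi).nullMeasurableSet) hdX
    _ = μ X := Measure.restrict_apply_univ X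

section Tiles

variable {n : ℕ} {a b : Fin n → ℝ} {κ : ℕ}

theorem tileVol_nonneg (hab : ∀ i, a i ≤ b i) : 0 ≤ tileVol n a b κ :=
  Finset.prod_nonneg fun i _ => div_nonneg (sub_nonneg.mpr (hab i)) κ.cast_nonneg

theorem measurableSet_tile (k : Fin n → ℕ) : MeasurableSet (tile n a b κ k) :=
  MeasurableSet.univ_pi fun _ => measurableSet_Icc

theorem tile_endpoint_le (hab : ∀ i, a i ≤ b i) (i : Fin n) {m m' : ℕ} (h : m < m') :
    a i + ((m : ℝ) + 1) / κ * (b i - a i) ≤ a i + (m' : ℝ) / κ * (b i - a i) := by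
  have hm : (m : ℝ) + 1 ≤ m' := by exact_mod_cast h
  gcongr
  exact sub_nonneg.mpr (hab i)

theorem aedisjoint_tile (hab : ∀ i, a i ≤ b i) {k k' : Fin n → ℕ} (hkk : k ≠ k') :
    AEDisjoint volume (tile n a b κ k) (tile n a b κ k') := by
  obtain ⟨i, hi⟩ := Function.ne_iff.mp hkk
  wlog hlt : k i < k' i generalizing k k'
  · exact (this hkk.symm hi.symm (lt_of_le_of_ne (not_lt.mp hlt) hi.symm)).symm
  refine measure_mono_null (fun x hx => ?_)
    (Measure.pi_hyperplane _ i (a i + (k' i : ℝ) / κ * (b i - a i)))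
  have hright := (hx.1 i (mem_univ i)).2
  have hleft := (hx.2 i (mem_univ i)).1
  exact le_antisymm (hright.trans (tile_endpoint_le hab i hlt)) hleft

theorem ofReal_tileVol_le_two_mul_of_isApproxTile {X : Set (Fin n → ℝ)} {k : Fin n → Fin κ}
    (hk : isApproxTile n a b κ X k) :
    ENNReal.ofReal (tileVol n a b κ) ≤ 2 * volume (tile n a b κ (fun i => (k i : ℕ)) ∩ X) := by
  rwa [isApproxTile, ENNReal.div_le_iff_le_mul (Or.inl two_ne_zero) (Or.inl ENNReal.ofNat_ne_top),
    mul_comm] at hk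

end Tiles

theorem gridMeasure_le_two_mul_outerMeasure_general (n : ℕ) (a b : Fin n → ℝ)
    (hab : ∀ i, a i < b i) (X : Set (Fin n → ℝ)) (κ : ℕ) :
    ENNReal.ofReal (gridMeasure n a b κ X) ≤ 2 * volume X := by
  classical
  have hab' : ∀ i, a i ≤ b i := fun i => (hab i).le
  set S := Finset.univ.filter (isApproxTile n a b κ X)
  calc ENNReal.ofReal (gridMeasure n a b κ X) = ∑ _k ∈ S, ENNReal.ofReal (tileVol n a b κ) := by
        rw [gridMeasure, ← Finset.sum_filter,
          ENNReal.ofReal_sum_of_nonneg fun _ _ => tileVol_nonneg hab']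
    _ ≤ ∑ k ∈ S, 2 * volume (tile n a b κ (fun i => (k i : ℕ)) ∩ X) :=
        Finset.sum_le_sum fun k hk =>
          ofReal_tileVol_le_two_mul_of_isApproxTile (Finset.mem_filter.mp hk).2
    _ = 2 * ∑ k ∈ S, volume (tile n a b κ (fun i => (k i : ℕ)) ∩ X) := (Finset.mul_sum ..).symm
    _ ≤ 2 * volume X := by
        gcongr
        exact sum_measure_inter_le (fun _ _ => measurableSet_tile _)
          (fun _ _ _ _ hkk => aedisjoint_tile hab' (Fin.val_injective.comp_left.ne hkk)) X

/-- For any subset `X` of the rectangle `H = ∏ i, [a i, b i]` and any integer `κ ≥ 1`,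
the rectangular κ-grid measure of `X` is at most twice its Lebesgue outer measure. -/
theorem gridMeasure_le_two_mul_outerMeasure (n : ℕ) (hn : 1 ≤ n) (a b : Fin n → ℝ)
    (hab : ∀ i, a i < b i) (X : Set (Fin n → ℝ))
    (hX : X ⊆ Set.univ.pi fun i => Set.Icc (a i) (b i)) (κ : ℕ) (hκ : 1 ≤ κ) :
    ENNReal.ofReal (gridMeasure n a b κ X) ≤ 2 * volume X :=
  gridMeasure_le_two_mul_outerMeasure_general n a b hab X κ
end

section
/- Let f : ℝ^n → ℝ^n satisfy the Lipschitz condition locally on ℝ^n, let H = ∏_{i=1}^n [a_i, b_i] ⊆ ℝ^n be a rectangle with a_i < b_i for all i, and let E ⊆ H. Let H'_1 and H'_2 be rectangles such that the interiors of H, H'_1, H'_2 are pairwise disjoint and F_1 := H ∩ H'_1 and F_2 := H ∩ H'_2 are facets of H with F_1 ≠ F_2. Then Focal(H,E,F_1) ∩ Focal(H,E,F_2) = ∅ (focal sets taken with respect to the neighbours H'_1, H'_2 respectively), and moreover Focal(H,E,∅) ∩ Focal(H,E,F_1) = ∅. In other words, the focal subsets of E associated with distinct targets in Facets(H) ∪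 {∅} are pairwise disjoint. -/
open Set

/-- The rectangle `∏ i, [a i, b i]` in `ℝ^n` (with the Euclidean norm). -/
def boxE (n : ℕ) (a b : Fin n → ℝ) : Set (EuclideanSpace ℝ (Fin n)) :=
  {x | ∀ i, x i ∈ Set.Icc (a i) (b i)}

/-- The facet of the rectangle `∏ i, [a i, b i]` w.r.t. variable `i`:
the upper facet `{x ∈ H | x i = b i}` for `s = true`,
the lower facet `{x ∈ H | x i = a i}` for `s = false`. -/
def facetE (n : ℕ) (a b : Fin n → ℝ) (i : Fin n) (s : Bool) :
    Set (EuclideanSpace ℝ (Fin n)) :=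
  {x ∈ boxE n a b | x i = if s then b i else a i}

/-- `y` is a solution of the autonomous system `ẋ = f(x)` on the set `J ⊆ ℝ`. -/
def IsSolOnE (n : ℕ) (f : EuclideanSpace ℝ (Fin n) → EuclideanSpace ℝ (Fin n))
    (y : ℝ → EuclideanSpace ℝ (Fin n)) (J : Set ℝ) : Prop :=
  ∀ t ∈ J, HasDerivAt y (f (y t)) t

/-- The focal subset `Focal(H, E, F')` of `E ⊆ H` on the rectangle `H = ∏ i, [a i, b i]`
targeting the facet `F'` of `H` indexed by `(i, s)`, where the neighbouring rectangle
`H'` across `F'` is `∏ j, [a' j, b' j]`. -/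
def focalFacetE (n : ℕ) (f : EuclideanSpace ℝ (Fin n) → EuclideanSpace ℝ (Fin n))
    (a b a' b' : Fin n → ℝ) (E : Set (EuclideanSpace ℝ (Fin n))) (i : Fin n) (s : Bool) :
    Set (EuclideanSpace ℝ (Fin n)) :=
  {y₀ ∈ E | ∃ y : ℝ → EuclideanSpace ℝ (Fin n), y 0 = y₀ ∧ ∃ ε ε' c : ℝ,
    0 < ε ∧ 0 < ε' ∧ 0 < c ∧
    IsSolOnE n f y (Set.Icc 0 (c + ε')) ∧
    (∀ t ∈ Set.Ioo 0 c, y t ∈ boxE n a b) ∧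
    (∀ t ∈ Set.Ioo 0 ε, y t ∈ interior (boxE n a b)) ∧
    y c ∈ facetE n a b i s ∧
    (∀ t ∈ Set.Ioo c (c + ε'), y t ∈ interior (boxE n a' b'))}

/-- The focal subset `Focal(H, E, ∅)` of `E` on the rectangle `H = ∏ i, [a i, b i]` not
leaving `H`. -/
def focalStayE (n : ℕ) (f : EuclideanSpace ℝ (Fin n) → EuclideanSpace ℝ (Fin n))
    (a b : Fin n → ℝ) (E : Set (EuclideanSpace ℝ (Fin n))) :
    Set (EuclideanSpace ℝ (Fin n)) :=
  {y₀ ∈ E | ∃ y : ℝ → EuclideanSpace ℝ (Fin n), y 0 = y₀ ∧ IsSolOnE n f y (Set.Ici 0) ∧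
    ∀ t > (0 : ℝ), y t ∈ boxE n a b}

/-!
Solutions of a locally Lipschitz system are unique: the set of times on which two solutions
agree is closed and, by the Lipschitz uniqueness theorem on a small neighbourhood, open to the
right. Hence two witnesses for focal membership of the same point follow one trajectory. A
rectangle with `a < b` is the closure of its interior, so a point of `H` never lies in the
interior of a rectangle whose interior misses that of `H`. The trajectory stays in `H` up to each
exit time and lies in the interior of the neighbour right after it, so the exit times coincide,
and just after them it would lie in the disjoint interiors of `H'₁` and `H'₂`. A trajectory that
never leaves `H` cannot enter the interior of `H'₁` at all.
-/

open Filter Topology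

theorem LocallyLipschitz.of_forall_isOpen_norm_sub_le {E F : Type*} [SeminormedAddCommGroup E]
    [SeminormedAddCommGroup F] {f : E → F}
    (hf : ∀ x, ∃ U : Set E, IsOpen U ∧ x ∈ U ∧ ∃ L : ℝ, ∀ x₁ ∈ U, ∀ x₂ ∈ U,
      ‖f x₁ - f x₂‖ ≤ L * ‖x₁ - x₂‖) :
    LocallyLipschitz f := fun x ↦ by
  obtain ⟨U, hU, hxU, L, hL⟩ := hf x
  exact ⟨_, U, hU.mem_nhds hxU, LipschitzOnWith.of_dist_le' fun x₁ h₁ x₂ h₂ ↦ by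
    simpa only [dist_eq_norm] using hL x₁ h₁ x₂ h₂⟩

theorem ODE_solution_unique_of_locallyLipschitz {E : Type*} [NormedAddCommGroup E]
    [NormedSpace ℝ E] {v : E → E} (hv : LocallyLipschitz v) {f g : ℝ → E} {a b : ℝ}
    (hf : ∀ t ∈ Icc a b, HasDerivAt f (v (f t)) t) (hg : ∀ t ∈ Icc a b, HasDerivAt g (v (g t)) t)
    (ha : f a = g a) : EqOn f g (Icc a b) := by
  have hfc : ContinuousOn f (Icc a b) := fun t ht ↦ (hf t ht).continuousAt.continuousWithinAt
  have hgc : ContinuousOn g (Icc a b) := fun t ht ↦ (hg t ht).continuousAt.continuousWithinAt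
  refine fun t ht ↦ IsClosed.Icc_subset_of_forall_mem_nhdsWithin (s := {t | f t = g t}) ?_ ha
    ?_ ht
  · rw [inter_comm]
    exact isClosed_Icc.isClosed_eq hfc hgc
  rintro x ⟨hfgx, hx⟩
  obtain ⟨K, V, hV, hK⟩ := hv (f x)
  have hnear : f ⁻¹' V ∩ g ⁻¹' V ∩ Iio b ∈ 𝓝[≥] x := mem_nhdsWithin_of_mem_nhds <|
    inter_mem (inter_mem ((hf x (Ico_subset_Icc_self hx)).continuousAt.preimage_mem_nhds hV)
      ((hg x (Ico_subset_Icc_self hx)).continuousAt.preimage_mem_nhds (hfgx ▸ hV)))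
      (Iio_mem_nhds hx.2)
  obtain ⟨u, hxu, hu⟩ := mem_nhdsGE_iff_exists_Ico_subset.1 hnear
  refine nhdsWithin_mono _ Ioi_subset_Ici_self
    (mem_nhdsGE_iff_exists_Ico_subset.2 ⟨u, hxu, fun t ht ↦ ?_⟩)
  have hsub : Icc x t ⊆ Icc a b := Icc_subset_Icc hx.1 (hu ht).2.le
  have hsub' : Ico x t ⊆ Ico x u := Ico_subset_Ico_right ht.2.le
  exact ODE_solution_unique_of_mem_Icc_right (v := fun _ ↦ v) (s := fun _ ↦ V)
    (fun _ _ ↦ hK) (hfc.mono hsub)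
    (fun r hr ↦ (hf r (hsub (Ico_subset_Icc_self hr))).hasDerivWithinAt)
    (fun r hr ↦ (hu (hsub' hr)).1.1) (hgc.mono hsub)
    (fun r hr ↦ (hg r (hsub (Ico_subset_Icc_self hr))).hasDerivWithinAt)
    (fun r hr ↦ (hu (hsub' hr)).1.2) hfgx ⟨ht.1, le_rfl⟩

theorem boxE_eq_preimage (n : ℕ) (a b : Fin n → ℝ) :
    boxE n a b = EuclideanSpace.equiv (Fin n) ℝ ⁻¹' univ.pi fun i ↦ Icc (a i) (b i) := by
  ext x
  simp only [boxE, mem_ofPred_eq, mem_preimage, mem_univ_pi]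
  rfl

theorem boxE_subset_closure_interior {n : ℕ} {a b : Fin n → ℝ} (hab : ∀ i, a i < b i) :
    boxE n a b ⊆ closure (interior (boxE n a b)) := by
  set e := EuclideanSpace.equiv (Fin n) ℝ
  set O := e ⁻¹' univ.pi fun i ↦ Ioo (a i) (b i)
  have hO : IsOpen O := (isOpen_set_pi finite_univ fun _ _ ↦ isOpen_Ioo).preimage e.continuous
  have hclosure : closure O = boxE n a b := by
    simp only [O, ← e.preimage_closure, closure_pi_set, closure_Ioo (hab _).ne,
      boxE_eq_preimage, e]
  calc boxE n a b = closure O := hclosure.symm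
    _ ⊆ closure (interior (boxE n a b)) :=
      closure_mono (interior_maximal (hclosure ▸ subset_closure) hO)

theorem disjoint_boxE_interior {n : ℕ} {a b a' b' : Fin n → ℝ} (hab : ∀ i, a i < b i)
    (hd : interior (boxE n a b) ∩ interior (boxE n a' b') = ∅) :
    Disjoint (boxE n a b) (interior (boxE n a' b')) :=
  ((disjoint_iff_inter_eq_empty.2 hd).closure_left isOpen_interior).mono_left
    (boxE_subset_closure_interior hab)

theorem le_of_eqOn_of_disjoint {X : Type*} {y₁ y₂ : ℝ → X} {A B : Set X} {c₁ c₂ d : ℝ}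
    (hAB : Disjoint A B) (hc₁ : 0 ≤ c₁) (hc₁d : c₁ < d) (heq : EqOn y₁ y₂ (Ioo 0 (min c₂ d)))
    (hA : ∀ t ∈ Ioo 0 c₂, y₂ t ∈ A) (hB : ∀ t ∈ Ioo c₁ d, y₁ t ∈ B) : c₂ ≤ c₁ := by
  by_contra! hc
  obtain ⟨t, htc₁, htmin⟩ := nonempty_Ioo.2 (lt_min hc hc₁d)
  have ht : t ∈ Ioo 0 (min c₂ d) := ⟨hc₁.trans_lt htc₁, htmin⟩
  rw [lt_min_iff] at htmin
  exact hAB.ne_of_mem (hA t ⟨ht.1, htmin.1⟩) (hB t ⟨htc₁, htmin.2⟩) (heq ht).symm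

theorem focal_disjoint_general (n : ℕ)
    (f : EuclideanSpace ℝ (Fin n) → EuclideanSpace ℝ (Fin n))
    (hLip : ∀ x : EuclideanSpace ℝ (Fin n), ∃ U : Set (EuclideanSpace ℝ (Fin n)),
      IsOpen U ∧ x ∈ U ∧ ∃ L : ℝ, ∀ x₁ ∈ U, ∀ x₂ ∈ U, ‖f x₁ - f x₂‖ ≤ L * ‖x₁ - x₂‖)
    (a b a₁ b₁ a₂ b₂ : Fin n → ℝ)
    (hab : ∀ i, a i < b i)
    (E : Set (EuclideanSpace ℝ (Fin n)))
    (hd₁ : interior (boxE n a b) ∩ interior (boxE n a₁ b₁) = ∅)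
    (hd₂ : interior (boxE n a b) ∩ interior (boxE n a₂ b₂) = ∅)
    (hd₁₂ : interior (boxE n a₁ b₁) ∩ interior (boxE n a₂ b₂) = ∅)
    (i₁ : Fin n) (s₁ : Bool) (i₂ : Fin n) (s₂ : Bool) :
    focalFacetE n f a b a₁ b₁ E i₁ s₁ ∩ focalFacetE n f a b a₂ b₂ E i₂ s₂ = ∅ ∧
    focalStayE n f a b E ∩ focalFacetE n f a b a₁ b₁ E i₁ s₁ = ∅ := by
  have hf := LocallyLipschitz.of_forall_isOpen_norm_sub_le hLip
  refine ⟨eq_empty_iff_forall_notMem.2 ?_, eq_empty_iff_forall_notMem.2 ?_⟩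
  · rintro - ⟨⟨-, y₁, rfl, -, ε₁, c₁, -, hε₁, hc₁, hsol₁, hbox₁, -, -, hint₁⟩,
      ⟨-, y₂, hy₂, -, ε₂, c₂, -, hε₂, hc₂, hsol₂, hbox₂, -, -, hint₂⟩⟩
    have heq : EqOn y₁ y₂ (Ioo 0 (min (c₁ + ε₁) (c₂ + ε₂))) :=
      (ODE_solution_unique_of_locallyLipschitz hf
        (fun t ht ↦ hsol₁ t ⟨ht.1, ht.2.trans (min_le_left _ _)⟩)
        (fun t ht ↦ hsol₂ t ⟨ht.1, ht.2.trans (min_le_right _ _)⟩) hy₂.symm).mono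
        Ioo_subset_Icc_self
    have h₂₁ : c₂ ≤ c₁ := le_of_eqOn_of_disjoint (disjoint_boxE_interior hab hd₁) hc₁.le
      (by linarith) (heq.mono (Ioo_subset_Ioo_right (by grind))) hbox₂ hint₁
    have h₁₂ : c₁ ≤ c₂ := le_of_eqOn_of_disjoint (disjoint_boxE_interior hab hd₂) hc₂.le
      (by linarith) (heq.symm.mono (Ioo_subset_Ioo_right (by grind))) hbox₁ hint₂
    obtain rfl := le_antisymm h₁₂ h₂₁
    obtain ⟨t, htc, htε⟩ := nonempty_Ioo.2 (lt_min (lt_add_of_pos_right c₁ hε₁)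
      (lt_add_of_pos_right c₁ hε₂))
    rw [lt_min_iff] at htε
    exact (disjoint_iff_inter_eq_empty.2 hd₁₂).ne_of_mem (hint₁ t ⟨htc, htε.1⟩)
      (hint₂ t ⟨htc, htε.2⟩) (heq ⟨hc₁.trans htc, lt_min htε.1 htε.2⟩)
  · rintro - ⟨⟨-, y₁, rfl, hsol₁, hbox₁⟩, ⟨-, y₂, hy₂, -, ε, c, -, hε, hc, hsol₂, -, -, -, hint₂⟩⟩
    have heq : EqOn y₂ y₁ (Ioo 0 (c + ε)) :=
      (ODE_solution_unique_of_locallyLipschitz hf hsol₂ (fun t ht ↦ hsol₁ t ht.1) hy₂).mono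
        Ioo_subset_Icc_self
    have hexit : c + ε ≤ c := le_of_eqOn_of_disjoint (disjoint_boxE_interior hab hd₁) hc.le
      (lt_add_of_pos_right c hε) (by rwa [min_self]) (fun t ht ↦ hbox₁ t ht.1) hint₂
    linarith

/-- Focal subsets associated with distinct targets in `Facets(H) ∪ {∅}` are pairwise
disjoint, for a locally Lipschitz vector field `f`: if `H`, `H'₁`, `H'₂` are rectangles
with pairwise disjoint interiors such that `F₁ = H ∩ H'₁` and `F₂ = H ∩ H'₂` are distinct
facets of `H`, then `Focal(H,E,F₁) ∩ Focal(H,E,F₂) = ∅` and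
`Focal(H,E,∅) ∩ Focal(H,E,F₁) = ∅`. -/
theorem focal_disjoint (n : ℕ)
    (f : EuclideanSpace ℝ (Fin n) → EuclideanSpace ℝ (Fin n))
    (hLip : ∀ x : EuclideanSpace ℝ (Fin n), ∃ U : Set (EuclideanSpace ℝ (Fin n)),
      IsOpen U ∧ x ∈ U ∧ ∃ L : ℝ, ∀ x₁ ∈ U, ∀ x₂ ∈ U, ‖f x₁ - f x₂‖ ≤ L * ‖x₁ - x₂‖)
    (a b a₁ b₁ a₂ b₂ : Fin n → ℝ)
    (hab : ∀ i, a i < b i) (hab₁ : ∀ i, a₁ i < b₁ i) (hab₂ : ∀ i, a₂ i < b₂ i)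
    (E : Set (EuclideanSpace ℝ (Fin n))) (hE : E ⊆ boxE n a b)
    (hd₁ : interior (boxE n a b) ∩ interior (boxE n a₁ b₁) = ∅)
    (hd₂ : interior (boxE n a b) ∩ interior (boxE n a₂ b₂) = ∅)
    (hd₁₂ : interior (boxE n a₁ b₁) ∩ interior (boxE n a₂ b₂) = ∅)
    (i₁ : Fin n) (s₁ : Bool) (i₂ : Fin n) (s₂ : Bool)
    (hF₁ : boxE n a b ∩ boxE n a₁ b₁ = facetE n a b i₁ s₁)
    (hF₂ : boxE n a b ∩ boxE n a₂ b₂ = facetE n a b i₂ s₂)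
    (hne : facetE n a b i₁ s₁ ≠ facetE n a b i₂ s₂) :
    focalFacetE n f a b a₁ b₁ E i₁ s₁ ∩ focalFacetE n f a b a₂ b₂ E i₂ s₂ = ∅ ∧
    focalStayE n f a b E ∩ focalFacetE n f a b a₁ b₁ E i₁ s₁ = ∅ :=
  focal_disjoint_general n f hLip a b a₁ b₁ a₂ b₂ hab E hd₁ hd₂ hd₁₂ i₁ s₁ i₂ s₂
end
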